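/- arXiv:2203.02398 — 3 statements merged into one kernel-verified Lean document; each statement's English description precedes it below -/
import Mathlib

section
/- Let A : [0,1] → Matrix (Fin p) (Fin p) ℝ be continuous with A(s)ᵀ = −A(s) for all s (skew-symmetric values), and let Q : [0,1] → Matrix (Fin p) (Fin p) ℝ be differentiable with Q'(s) = Q(s)·A(s) for all s ∈ [0,1]. If Q(0)ᵀ·Q(0) = I and det Q(0) = 1, then for every s ∈ [0,1], Q(s)ᵀ·Q(s) = I and det Q(s) = 1; i.e., a solution of the Frenet-Serret ODE starting in SO(p) remains in SO(p). -/
open Set Matrix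

attribute [local instance] Matrix.normedAddCommGroup Matrix.normedSpace

/-!
Skew-symmetry of `A` makes `Q Qᵀ` have derivative `Q (A + Aᵀ) Qᵀ = 0`, so `Q Qᵀ = Q(0) Q(0)ᵀ = 1`
on the whole interval, and a one-sided inverse of a square matrix is two-sided. Then
`(det Q)² = 1`, and the continuous function `det Q` on the connected interval cannot jump from
`1` to `-1`.
-/

section Derivatives

variable {𝕜 : Type*} [NontriviallyNormedField 𝕜] {l m n : Type*} {t : 𝕜}

theorem HasDerivAt.matrix_transpose [Fintype m] [Fintype n] {f : 𝕜 → Matrix m n 𝕜}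
    {f' : Matrix m n 𝕜} (hf : HasDerivAt f f' t) : HasDerivAt (fun s => (f s)ᵀ) f'ᵀ t :=
  hasDerivAt_pi.mpr fun j => hasDerivAt_pi.mpr fun i =>
    hasDerivAt_pi.mp (hasDerivAt_pi.mp hf i) j

theorem HasDerivAt.matrix_mul [Fintype m] [Fintype n] {f : 𝕜 → Matrix l m 𝕜}
    {g : 𝕜 → Matrix m n 𝕜} {f' : Matrix l m 𝕜} {g' : Matrix m n 𝕜} (hf : HasDerivAt f f' t)
    (hg : HasDerivAt g g' t) :
    HasDerivAt (fun s => f s * g s) (f' * g t + f t * g') t := by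
  refine hasDerivAt_pi.mpr fun i => hasDerivAt_pi.mpr fun j => ?_
  have hfik k := hasDerivAt_pi.mp (hasDerivAt_pi.mp hf i) k
  have hgkj k := hasDerivAt_pi.mp (hasDerivAt_pi.mp hg k) j
  convert HasDerivAt.fun_sum fun k (_ : k ∈ Finset.univ) => (hfik k).mul (hgkj k) using 1
  · rfl
  · simp only [Matrix.add_apply, mul_apply, Finset.sum_add_distrib]

end Derivatives

variable {n : Type*} [Fintype n]

theorem hasDerivAt_mul_transpose_of_hasDerivAt_mul_skew {𝕜 : Type*} [NontriviallyNormedField 𝕜]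
    {Q A : 𝕜 → Matrix n n 𝕜} {t : 𝕜} (hQ : HasDerivAt Q (Q t * A t) t)
    (hA : (A t)ᵀ = -A t) : HasDerivAt (fun s => Q s * (Q s)ᵀ) 0 t := by
  convert hQ.matrix_mul hQ.matrix_transpose using 1
  rw [transpose_mul, hA, Matrix.neg_mul, Matrix.mul_neg, Matrix.mul_assoc, add_neg_cancel]

theorem mul_transpose_eq_of_hasDerivAt_mul_skew {Q A : ℝ → Matrix n n ℝ} {a b : ℝ}
    (hQ : ∀ s ∈ Icc a b, HasDerivAt Q (Q s * A s) s) (hA : ∀ s ∈ Icc a b, (A s)ᵀ = -A s) :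
    ∀ s ∈ Icc a b, Q s * (Q s)ᵀ = Q a * (Q a)ᵀ := by
  have hderiv s (hs : s ∈ Icc a b) :=
    hasDerivAt_mul_transpose_of_hasDerivAt_mul_skew (hQ s hs) (hA s hs)
  exact constant_of_has_deriv_right_zero
    (fun s hs => (hderiv s hs).continuousAt.continuousWithinAt)
    (fun s hs => (hderiv s (Ico_subset_Icc_self hs)).hasDerivWithinAt)

theorem det_eq_one_of_mul_transpose_eq_one [DecidableEq n] {R α : Type*} [CommRing R]
    [NoZeroDivisors R] [TopologicalSpace R] [IsTopologicalRing R] [T1Space R]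
    [TopologicalSpace α] {S : Set α} {Q : α → Matrix n n R} (hS : IsPreconnected S)
    (hQ : ContinuousOn Q S) (horth : ∀ s ∈ S, Q s * (Q s)ᵀ = 1) {s₀ : α} (hs₀ : s₀ ∈ S)
    (hdet : (Q s₀).det = 1) : ∀ s ∈ S, (Q s).det = 1 := by
  have hsq : EqOn ((fun s => (Q s).det) ^ 2) 1 S := fun s hs => by
    simpa [sq, det_transpose] using congrArg det (horth s hs)
  rcases hS.eq_one_or_eq_neg_one_of_sq_eq (continuous_id.matrix_det.comp_continuousOn hQ) hsq
    with h | h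
  · exact h
  · intro s hs
    calc (Q s).det = -1 := h hs
      _ = (Q s₀).det := (h hs₀).symm
      _ = 1 := hdet

theorem frenet_ode_stays_in_SO_general
    (p : ℕ)
    (A Q : ℝ → Matrix (Fin p) (Fin p) ℝ)
    (hskew : ∀ s ∈ Icc (0 : ℝ) 1, (A s)ᵀ = -A s)
    (hQ : ∀ s ∈ Icc (0 : ℝ) 1, HasDerivAt Q (Q s * A s) s)
    (hQ0orth : (Q 0)ᵀ * Q 0 = 1)
    (hQ0det : (Q 0).det = 1) :
    ∀ s ∈ Icc (0 : ℝ) 1, (Q s)ᵀ * Q s = 1 ∧ (Q s).det = 1 := by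
  have horth : ∀ s ∈ Icc (0 : ℝ) 1, Q s * (Q s)ᵀ = 1 := fun s hs => by
    rw [mul_transpose_eq_of_hasDerivAt_mul_skew hQ hskew s hs, mul_eq_one_comm.mp hQ0orth]
  have hdet := det_eq_one_of_mul_transpose_eq_one isPreconnected_Icc
    (fun s hs => (hQ s hs).continuousAt.continuousWithinAt) horth
    (left_mem_Icc.mpr zero_le_one) hQ0det
  exact fun s hs => ⟨mul_eq_one_comm.mp (horth s hs), hdet s hs⟩

/-- A solution of the Frenet-Serret ODE `Q'(s) = Q(s)A(s)` with
skew-symmetric continuous `A` that starts in `SO(p)` remains in `SO(p)`. -/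
theorem frenet_ode_stays_in_SO
    (p : ℕ)
    (A Q : ℝ → Matrix (Fin p) (Fin p) ℝ)
    (hAcont : ContinuousOn A (Icc (0 : ℝ) 1))
    (hskew : ∀ s ∈ Icc (0 : ℝ) 1, (A s)ᵀ = -A s)
    (hQ : ∀ s ∈ Icc (0 : ℝ) 1, HasDerivAt Q (Q s * A s) s)
    (hQ0orth : (Q 0)ᵀ * Q 0 = 1)
    (hQ0det : (Q 0).det = 1) :
    ∀ s ∈ Icc (0 : ℝ) 1, (Q s)ᵀ * Q s = 1 ∧ (Q s).det = 1 :=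
  frenet_ode_stays_in_SO_general p A Q hskew hQ hQ0orth hQ0det
end

section
/- Let A : [0,1] → Matrix (Fin p) (Fin p) ℝ be C¹, and let Q : [0,1] → Matrix (Fin p) (Fin p) ℝ be differentiable with Q'(s) = Q(s)·A(s) for all s ∈ [0,1]. Then there exists a constant C > 0 such that for all s, h with 0 ≤ h and s, s+h ∈ [0,1], ‖Q(s+h) − Q(s)·exp(h·A(s + h/2))‖ ≤ C·h², where exp is the matrix exponential; i.e., the midpoint Lie-Euler approximation of the flow has uniform error of order h². -/
/-!
Put `X = h • A (s + h / 2)`. Then `Q (s + h) - Q s * exp X` is the sum of the first-order Taylor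
remainder of `Q` at `s`, of `-h • (Q s * (A (s + h / 2) - A s))` and of `-Q s * (exp X - 1 - X)`.
The first is `O(h²)` since `Q'' = Q A² + Q A'` is bounded, the second since `A'` is bounded, and the
third since `‖exp X - 1 - X‖ ≤ ‖X‖² exp ‖X‖`. This works in any real Banach algebra; the entrywise
sup norm of the statement is dominated by the `L∞` operator norm, a Banach algebra norm on matrices
defining the same topology.
-/

open Set Matrix

open Nat in
theorem NormedSpace.norm_exp_sub_one_sub_le {𝔸 : Type*} [NormedRing 𝔸] [NormedAlgebra ℝ 𝔸]
    [CompleteSpace 𝔸] (X : 𝔸) : ‖NormedSpace.exp X - 1 - X‖ ≤ ‖X‖ ^ 2 * Real.exp ‖X‖ := by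
  have hX : HasSum (fun n ↦ ((n + 2)! : ℝ)⁻¹ • X ^ (n + 2)) (NormedSpace.exp X - 1 - X) := by
    simpa [Finset.sum_range_succ, sub_sub] using
      (hasSum_nat_add_iff' 2).mpr (NormedSpace.exp_series_hasSum_exp' (𝕂 := ℝ) X)
  have hr : HasSum (fun n ↦ ‖X‖ ^ 2 * (‖X‖ ^ n / n !)) (‖X‖ ^ 2 * Real.exp ‖X‖) := by
    rw [Real.exp_eq_exp_ℝ]
    exact (NormedSpace.expSeries_div_hasSum_exp ‖X‖).mul_left _
  refine hX.norm_le_of_bounded hr fun n ↦ ?_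
  calc ‖((n + 2)! : ℝ)⁻¹ • X ^ (n + 2)‖ ≤ ((n + 2)! : ℝ)⁻¹ * ‖X‖ ^ (n + 2) := by
        rw [norm_smul, norm_inv, RCLike.norm_natCast]
        gcongr
        exact norm_pow_le' X (Nat.succ_pos _)
    _ ≤ (n ! : ℝ)⁻¹ * ‖X‖ ^ (n + 2) := by
        gcongr
        omega
    _ = ‖X‖ ^ 2 * (‖X‖ ^ n / n !) := by ring

theorem norm_image_sub_sub_smul_deriv_le {E : Type*} [NormedAddCommGroup E]
    [NormedSpace ℝ E] {f f' f'' : ℝ → E} {a b M : ℝ} (hab : a ≤ b)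
    (hf : ∀ t ∈ Icc a b, HasDerivAt f (f' t) t) (hf' : ∀ t ∈ Icc a b, HasDerivAt f' (f'' t) t)
    (hM : ∀ t ∈ Icc a b, ‖f'' t‖ ≤ M) :
    ‖f b - f a - (b - a) • f' a‖ ≤ M * (b - a) ^ 2 := by
  have hf'_sub : ∀ t ∈ Icc a b, ‖f' t - f' a‖ ≤ M * (b - a) := fun t ht ↦
    calc ‖f' t - f' a‖ ≤ M * (t - a) := norm_image_sub_le_of_norm_deriv_le_segment'
          (fun u hu ↦ (hf' u hu).hasDerivWithinAt) (fun u hu ↦ hM u (Ico_subset_Icc_self hu)) t ht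
      _ ≤ M * (b - a) := by
          have : 0 ≤ M := (norm_nonneg _).trans (hM a (left_mem_Icc.2 hab))
          gcongr; exact ht.2
  have hg : ∀ t ∈ Icc a b,
      HasDerivWithinAt (fun u ↦ f u - (u - a) • f' a) (f' t - f' a) (Icc a b) t := fun t ht ↦ by
    simpa only [one_smul] using
      ((hf t ht).fun_sub (((hasDerivAt_id' t).sub_const a).smul_const (f' a))).hasDerivWithinAt
  have := norm_image_sub_le_of_norm_deriv_le_segment' hg
    (fun t ht ↦ hf'_sub t (Ico_subset_Icc_self ht)) b (right_mem_Icc.2 hab)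
  rwa [sub_self, zero_smul, sub_zero, sub_right_comm, mul_assoc, ← sq] at this

section BanachAlgebra

variable {𝔸 : Type*} [NormedRing 𝔸] [NormedAlgebra ℝ 𝔸] [CompleteSpace 𝔸]

theorem norm_sub_mul_exp_midpoint_le {A A' Q : ℝ → 𝔸} {s h MQ MA MA' : ℝ} (hh : 0 ≤ h)
    (hA : ∀ t ∈ Icc s (s + h), HasDerivAt A (A' t) t)
    (hQ : ∀ t ∈ Icc s (s + h), HasDerivAt Q (Q t * A t) t)
    (hMQ : ∀ t ∈ Icc s (s + h), ‖Q t‖ ≤ MQ) (hMA : ∀ t ∈ Icc s (s + h), ‖A t‖ ≤ MA)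
    (hMA' : ∀ t ∈ Icc s (s + h), ‖A' t‖ ≤ MA') :
    ‖Q (s + h) - Q s * NormedSpace.exp (h • A (s + h / 2))‖ ≤
      MQ * (MA ^ 2 + 3 / 2 * MA' + MA ^ 2 * Real.exp (h * MA)) * h ^ 2 := by
  have hs : s ∈ Icc s (s + h) := left_mem_Icc.2 (by linarith)
  have hm : s + h / 2 ∈ Icc s (s + h) := ⟨by linarith, by linarith⟩
  have hMQ0 : 0 ≤ MQ := (norm_nonneg _).trans (hMQ s hs)
  have hMA0 : 0 ≤ MA := (norm_nonneg _).trans (hMA s hs)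
  have taylor : ‖Q (s + h) - Q s - h • (Q s * A s)‖ ≤ MQ * (MA ^ 2 + MA') * h ^ 2 := by
    have hQA : ∀ t ∈ Icc s (s + h),
        HasDerivAt (fun u ↦ Q u * A u) (Q t * A t * A t + Q t * A' t) t :=
      fun t ht ↦ (hQ t ht).mul (hA t ht)
    have hbound : ∀ t ∈ Icc s (s + h), ‖Q t * A t * A t + Q t * A' t‖ ≤ MQ * (MA ^ 2 + MA') :=
      fun t ht ↦ calc
        _ ≤ ‖Q t‖ * ‖A t‖ * ‖A t‖ + ‖Q t‖ * ‖A' t‖ :=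
          (norm_add_le _ _).trans (add_le_add
            ((norm_mul_le _ _).trans (mul_le_mul_of_nonneg_right (norm_mul_le _ _) (norm_nonneg _)))
            (norm_mul_le _ _))
        _ ≤ MQ * MA * MA + MQ * MA' := by
          have := hMQ t ht
          have := hMA t ht
          have := hMA' t ht
          gcongr
        _ = MQ * (MA ^ 2 + MA') := by ring
    simpa using norm_image_sub_sub_smul_deriv_le (by linarith) hQ hQA hbound
  have shift : ‖A (s + h / 2) - A s‖ ≤ MA' * (h / 2) := by
    simpa using norm_image_sub_le_of_norm_deriv_le_segment'
      (fun t ht ↦ (hA t ht).hasDerivWithinAt) (fun t ht ↦ hMA' t (Ico_subset_Icc_self ht)) _ hm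
  set X := h • A (s + h / 2)
  have hX : ‖X‖ ≤ h * MA := by
    rw [norm_smul, Real.norm_of_nonneg hh]
    exact mul_le_mul_of_nonneg_left (hMA _ hm) hh
  have remainder : ‖NormedSpace.exp X - 1 - X‖ ≤ (h * MA) ^ 2 * Real.exp (h * MA) :=
    (NormedSpace.norm_exp_sub_one_sub_le X).trans (by gcongr)
  have split : Q (s + h) - Q s * NormedSpace.exp X = (Q (s + h) - Q s - h • (Q s * A s))
      - h • (Q s * (A (s + h / 2) - A s)) - Q s * (NormedSpace.exp X - 1 - X) := by
    simp only [X, mul_sub, mul_one, mul_smul_comm, smul_sub]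
    abel
  calc ‖Q (s + h) - Q s * NormedSpace.exp X‖
      ≤ ‖Q (s + h) - Q s - h • (Q s * A s)‖ + h * (‖Q s‖ * ‖A (s + h / 2) - A s‖)
        + ‖Q s‖ * ‖NormedSpace.exp X - 1 - X‖ := by
        rw [split]
        refine (norm_sub_le _ _).trans (add_le_add ((norm_sub_le _ _).trans (add_le_add le_rfl ?_))
          (norm_mul_le _ _))
        rw [norm_smul, Real.norm_of_nonneg hh]
        exact mul_le_mul_of_nonneg_left (norm_mul_le _ _) hh
    _ ≤ MQ * (MA ^ 2 + MA') * h ^ 2 + h * (MQ * (MA' * (h / 2)))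
        + MQ * ((h * MA) ^ 2 * Real.exp (h * MA)) := by
        have hQs := hMQ s hs
        gcongr
    _ = MQ * (MA ^ 2 + 3 / 2 * MA' + MA ^ 2 * Real.exp (h * MA)) * h ^ 2 := by ring

theorem exists_norm_sub_mul_exp_midpoint_le {A A' Q : ℝ → 𝔸} {a b : ℝ}
    (hA : ∀ s ∈ Icc a b, HasDerivAt A (A' s) s) (hA' : ContinuousOn A' (Icc a b))
    (hQ : ∀ s ∈ Icc a b, HasDerivAt Q (Q s * A s) s) :
    ∃ C > 0, ∀ s h : ℝ, 0 ≤ h → s ∈ Icc a b → s + h ∈ Icc a b →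
      ‖Q (s + h) - Q s * NormedSpace.exp (h • A (s + h / 2))‖ ≤ C * h ^ 2 := by
  obtain ⟨MQ, hMQ⟩ := isCompact_Icc.exists_bound_of_continuousOn
    fun t ht ↦ (hQ t ht).continuousAt.continuousWithinAt
  obtain ⟨MA, hMA⟩ := isCompact_Icc.exists_bound_of_continuousOn
    fun t ht ↦ (hA t ht).continuousAt.continuousWithinAt
  obtain ⟨MA', hMA'⟩ := isCompact_Icc.exists_bound_of_continuousOn hA'
  set K := MQ * (MA ^ 2 + 3 / 2 * MA' + MA ^ 2 * Real.exp ((b - a) * MA))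
  refine ⟨max K 1, by positivity, fun s h hh hs hsh ↦ ?_⟩
  have hsub : Icc s (s + h) ⊆ Icc a b := Icc_subset_Icc hs.1 hsh.2
  have hMQ0 : 0 ≤ MQ := (norm_nonneg _).trans (hMQ s hs)
  have hMA0 : 0 ≤ MA := (norm_nonneg _).trans (hMA s hs)
  calc _ ≤ MQ * (MA ^ 2 + 3 / 2 * MA' + MA ^ 2 * Real.exp (h * MA)) * h ^ 2 :=
        norm_sub_mul_exp_midpoint_le hh (fun t ht ↦ hA t (hsub ht)) (fun t ht ↦ hQ t (hsub ht))
          (fun t ht ↦ hMQ t (hsub ht)) (fun t ht ↦ hMA t (hsub ht)) (fun t ht ↦ hMA' t (hsub ht))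
    _ ≤ K * h ^ 2 := by simp only [K]; gcongr; linarith [hs.1, hsh.2]
    _ ≤ max K 1 * h ^ 2 := by gcongr; exact le_max_left _ _

end BanachAlgebra

section LinftyOpNorm

attribute [local instance] Matrix.linftyOpNormedAddCommGroup

theorem Matrix.norm_entry_le_linfty_opNorm {m n α : Type*} [Fintype m] [Fintype n]
    [NormedAddCommGroup α]
    (M : Matrix m n α) (i : m) (j : n) : ‖M i j‖ ≤ ‖M‖ := by
  have : ‖M i j‖₊ ≤ ‖M‖₊ := by
    rw [linfty_opNNNorm_def]
    exact (Finset.single_le_sum (fun k _ ↦ by positivity) (Finset.mem_univ j)).trans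
      (Finset.le_sup (f := fun i ↦ ∑ k, ‖M i k‖₊) (Finset.mem_univ i))
  exact_mod_cast this

end LinftyOpNorm

attribute [local instance] Matrix.normedAddCommGroup Matrix.normedSpace

/-- For a C¹ coefficient `A` and a solution `Q` of
`Q'(s) = Q(s)·A(s)` on `[0,1]`, the midpoint Lie-Euler approximation of the
flow has uniform error of order `h²`:
`‖Q(s+h) − Q(s)·exp(h·A(s+h/2))‖ ≤ C·h²`. -/
theorem midpoint_lie_euler_order_two
    (p : ℕ)
    (A A' Q : ℝ → Matrix (Fin p) (Fin p) ℝ)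
    (hA : ∀ s ∈ Icc (0 : ℝ) 1, HasDerivAt A (A' s) s)
    (hA'cont : ContinuousOn A' (Icc (0 : ℝ) 1))
    (hQ : ∀ s ∈ Icc (0 : ℝ) 1, HasDerivAt Q (Q s * A s) s) :
    ∃ C > 0, ∀ s h : ℝ, 0 ≤ h → s ∈ Icc (0 : ℝ) 1 → s + h ∈ Icc (0 : ℝ) 1 →
      ‖Q (s + h) - Q s * NormedSpace.exp (h • A (s + h / 2))‖ ≤ C * h ^ 2 := by
  obtain ⟨C, hC, hbound⟩ := @exists_norm_sub_mul_exp_midpoint_le _ Matrix.linftyOpNormedRing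
    Matrix.linftyOpNormedAlgebra (FiniteDimensional.complete ℝ _) A A' Q 0 1 hA hA'cont hQ
  refine ⟨C, hC, fun s h hh hs hsh ↦ (Matrix.norm_le_iff (by positivity)).2 fun i j ↦ ?_⟩
  exact (Matrix.norm_entry_le_linfty_opNorm _ i j).trans (hbound s h hh hs hsh)
end

section
/- Let X₁, X₂ : [0,L] → ℝ³ be unit-speed C³ curves whose Frenet apparatuses (Tᵢ, κᵢ, Nᵢ, Bᵢ, τᵢ) satisfy κᵢ(s) > 0 and the Frenet-Serret equations Tᵢ' = κᵢNᵢ, Nᵢ' = −κᵢTᵢ + τᵢBᵢ, Bᵢ' = −τᵢNᵢ on [0,L], for i = 1, 2. If κ₁(s) = κ₂(s) and τ₁(s) = τ₂(s) for all s ∈ [0,L], then there exist a vector a ∈ ℝ³ and a rotation matrix R ∈ SO(3) such that X₁(s) = a + R·X₂(s) for all s ∈ [0,L]; moreover R = Q₁(0)·Q₂(0)ᵀ where Qᵢ(s) = [Tᵢ(s) | Nᵢ(s) | Bᵢ(s)] is the Frenet frame matrix. -/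
open Set Matrix

/-- Cross product on `EuclideanSpace ℝ (Fin 3)`. -/
noncomputable def cross3 (u v : EuclideanSpace ℝ (Fin 3)) : EuclideanSpace ℝ (Fin 3) :=
  (WithLp.equiv 2 (Fin 3 → ℝ)).symm
    ![u 1 * v 2 - u 2 * v 1, u 2 * v 0 - u 0 * v 2, u 0 * v 1 - u 1 * v 0]

/-- The Frenet frame matrix `Q = [T | N | B]` with columns `T`, `N`, `B`. -/
noncomputable def frameMatrix (T N B : EuclideanSpace ℝ (Fin 3)) :
    Matrix (Fin 3) (Fin 3) ℝ :=
  Matrix.of fun i j => (![T, N, B] j) i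

/-!
The Frenet frames at `0` are positively oriented orthonormal frames, so `R = Q₁(0) Q₂(0)ᵀ` is a
rotation carrying the frame of `X₂` at `0` to that of `X₁`. Since `R` is linear, the rotated frame
`R (T₂, N₂, B₂)` solves the same Frenet–Serret system as `(T₁, N₁, B₁)`. This system is linear
with skew-symmetric coefficients, so for the difference of two solutions
`‖ΔT‖² + ‖ΔN‖² + ‖ΔB‖²` is constant, hence zero. Therefore `T₁ = R T₂`, and `X₁ - R X₂` has
zero derivative.
-/

open scoped RealInnerProductSpace

lemma eq_left_of_hasDerivAt_zero {E : Type*} [NormedAddCommGroup E] [NormedSpace ℝ E]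
    {f : ℝ → E} {a b : ℝ} (hf : ∀ s ∈ Icc a b, HasDerivAt f 0 s) : ∀ s ∈ Icc a b, f s = f a :=
  constant_of_has_deriv_right_zero (fun s hs => (hf s hs).continuousAt.continuousWithinAt)
    fun s hs => (hf s (Ico_subset_Icc_self hs)).hasDerivWithinAt

lemma HasDerivWithinAt.inner_eq_zero_of_norm_const {E : Type*} [NormedAddCommGroup E]
    [InnerProductSpace ℝ E] {T : ℝ → E} {T' : E} {I : Set ℝ} {s c : ℝ}
    (hT : HasDerivWithinAt T T' I s) (hI : UniqueDiffWithinAt ℝ I s) (hs : s ∈ I)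
    (hc : ∀ x ∈ I, ‖T x‖ = c) : ⟪T s, T'⟫ = 0 := by
  have h₂ : HasDerivWithinAt (fun x => ‖T x‖ ^ 2) 0 I s :=
    (hasDerivWithinAt_const s I (c ^ 2)).congr (fun x hx => by rw [hc x hx]) (by rw [hc s hs])
  simpa using hI.eq_deriv I hT.norm_sq h₂

def IsFrenetSerretOn {E : Type*} [NormedAddCommGroup E] [NormedSpace ℝ E] (I : Set ℝ)
    (κ τ : ℝ → ℝ) (T N B : ℝ → E) : Prop :=
  ∀ s ∈ I, HasDerivAt T (κ s • N s) s ∧ HasDerivAt N (-κ s • T s + τ s • B s) s ∧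
    HasDerivAt B (-τ s • N s) s

namespace IsFrenetSerretOn

section NormedSpace

variable {E F : Type*} [NormedAddCommGroup E] [NormedSpace ℝ E] [NormedAddCommGroup F]
  [NormedSpace ℝ F] {I : Set ℝ} {κ τ : ℝ → ℝ}

lemma sub {T₁ N₁ B₁ T₂ N₂ B₂ : ℝ → E} (h₁ : IsFrenetSerretOn I κ τ T₁ N₁ B₁)
    (h₂ : IsFrenetSerretOn I κ τ T₂ N₂ B₂) :
    IsFrenetSerretOn I κ τ (T₁ - T₂) (N₁ - N₂) (B₁ - B₂) := by
  intro s hs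
  obtain ⟨hT₁, hN₁, hB₁⟩ := h₁ s hs
  obtain ⟨hT₂, hN₂, hB₂⟩ := h₂ s hs
  refine ⟨?_, ?_, ?_⟩
  · convert hT₁.sub hT₂ using 1; simp only [Pi.sub_apply, smul_sub]
  · convert hN₁.sub hN₂ using 1; simp only [Pi.sub_apply, smul_sub]; abel
  · convert hB₁.sub hB₂ using 1; simp only [Pi.sub_apply, smul_sub]

lemma map {T N B : ℝ → E} (h : IsFrenetSerretOn I κ τ T N B) (ρ : E →L[ℝ] F) :
    IsFrenetSerretOn I κ τ (ρ ∘ T) (ρ ∘ N) (ρ ∘ B) := by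
  intro s hs
  obtain ⟨hT, hN, hB⟩ := h s hs
  refine ⟨?_, ?_, ?_⟩
  · convert ρ.hasFDerivAt.comp_hasDerivAt s hT using 1; simp
  · convert ρ.hasFDerivAt.comp_hasDerivAt s hN using 1; simp
  · convert ρ.hasFDerivAt.comp_hasDerivAt s hB using 1; simp

end NormedSpace

section InnerProductSpace

variable {E : Type*} [NormedAddCommGroup E] [InnerProductSpace ℝ E] {κ τ : ℝ → ℝ}
  {T N B : ℝ → E}

lemma hasDerivAt_sum_norm_sq {I : Set ℝ} (h : IsFrenetSerretOn I κ τ T N B) {s : ℝ}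
    (hs : s ∈ I) : HasDerivAt (fun x => ‖T x‖ ^ 2 + ‖N x‖ ^ 2 + ‖B x‖ ^ 2) 0 s := by
  obtain ⟨hT, hN, hB⟩ := h s hs
  have skew : 2 * ⟪T s, κ s • N s⟫ + 2 * ⟪N s, -κ s • T s + τ s • B s⟫ +
      2 * ⟪B s, -τ s • N s⟫ = 0 := by
    rw [inner_add_right, real_inner_smul_right, real_inner_smul_right, real_inner_smul_right,
      real_inner_smul_right, real_inner_comm (T s) (N s), real_inner_comm (N s) (B s)]
    ring
  exact skew ▸ (hT.norm_sq.add hN.norm_sq).add hB.norm_sq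

lemma eq_zero {a b : ℝ} (h : IsFrenetSerretOn (Icc a b) κ τ T N B) (hT : T a = 0)
    (hN : N a = 0) (hB : B a = 0) : ∀ s ∈ Icc a b, T s = 0 ∧ N s = 0 ∧ B s = 0 := by
  intro s hs
  have h0 : ‖T s‖ ^ 2 + ‖N s‖ ^ 2 + ‖B s‖ ^ 2 = 0 := by
    simpa [hT, hN, hB] using
      eq_left_of_hasDerivAt_zero (fun x hx => h.hasDerivAt_sum_norm_sq hx) s hs
  rw [add_eq_zero_iff_of_nonneg (by positivity) (by positivity),
    add_eq_zero_iff_of_nonneg (by positivity) (by positivity)] at h0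
  simpa [and_assoc] using h0

lemma unique {a b : ℝ} {T' N' B' : ℝ → E} (h : IsFrenetSerretOn (Icc a b) κ τ T N B)
    (h' : IsFrenetSerretOn (Icc a b) κ τ T' N' B') (hT : T a = T' a) (hN : N a = N' a)
    (hB : B a = B' a) : ∀ s ∈ Icc a b, T s = T' s ∧ N s = N' s ∧ B s = B' s := by
  intro s hs
  simpa only [Pi.sub_apply, sub_eq_zero] using
    (h.sub h').eq_zero (sub_eq_zero.2 hT) (sub_eq_zero.2 hN) (sub_eq_zero.2 hB) s hs

end InnerProductSpace

end IsFrenetSerretOn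

lemma EuclideanSpace.real_inner_eq_dotProduct {ι : Type*} [Fintype ι]
    (u v : EuclideanSpace ℝ ι) : ⟪u, v⟫ = WithLp.ofLp u ⬝ᵥ WithLp.ofLp v := by
  rw [EuclideanSpace.inner_eq_star_dotProduct, star_trivial, dotProduct_comm]

lemma cross3_eq_crossProduct (u v : EuclideanSpace ℝ (Fin 3)) :
    cross3 u v = WithLp.toLp 2 (WithLp.ofLp u ⨯₃ WithLp.ofLp v) := rfl

lemma inner_cross3_self_left (u v : EuclideanSpace ℝ (Fin 3)) : ⟪u, cross3 u v⟫ = 0 := by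
  rw [EuclideanSpace.real_inner_eq_dotProduct, cross3_eq_crossProduct]
  exact dot_self_cross _ _

lemma inner_cross3_self_right (u v : EuclideanSpace ℝ (Fin 3)) : ⟪v, cross3 u v⟫ = 0 := by
  rw [EuclideanSpace.real_inner_eq_dotProduct, cross3_eq_crossProduct]
  exact dot_cross_self _ _

lemma inner_cross3_cross3 (u v w x : EuclideanSpace ℝ (Fin 3)) :
    ⟪cross3 u v, cross3 w x⟫ = ⟪u, w⟫ * ⟪v, x⟫ - ⟪u, x⟫ * ⟪v, w⟫ := by
  simp only [EuclideanSpace.real_inner_eq_dotProduct, cross3_eq_crossProduct]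
  exact cross_dot_cross _ _ _ _

lemma orthonormal_cross3 {u v : EuclideanSpace ℝ (Fin 3)} (h : Orthonormal ℝ ![u, v]) :
    Orthonormal ℝ ![u, v, cross3 u v] := by
  have hu : ‖u‖ = 1 := h.norm_eq_one 0
  have hv : ‖v‖ = 1 := h.norm_eq_one 1
  have huv : ⟪u, v⟫ = 0 := h.inner_eq_zero (i := 0) (j := 1) (by decide)
  have hw : ‖cross3 u v‖ = 1 := by
    rw [norm_eq_sqrt_real_inner, inner_cross3_cross3, real_inner_self_eq_norm_sq,
      real_inner_self_eq_norm_sq, hu, hv, huv, real_inner_comm, huv]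
    norm_num
  simp [orthonormal_vecCons_iff, Fin.forall_fin_succ, hu, hv, hw, huv,
    inner_cross3_self_left, inner_cross3_self_right]

lemma orthonormal_tangent_normal {E : Type*} [NormedAddCommGroup E] [InnerProductSpace ℝ E]
    {t t' n : E} {κ : ℝ} (ht : ‖t‖ = 1) (htt' : ⟪t, t'⟫ = 0) (hκ : κ = ‖t'‖) (hκpos : 0 < κ)
    (ht' : t' = κ • n) : Orthonormal ℝ ![t, n] := by
  have hn : ‖n‖ = 1 := by
    rw [ht', norm_smul, Real.norm_of_nonneg hκpos.le] at hκ
    exact (mul_eq_left₀ hκpos.ne').mp hκ.symm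
  have htn : ⟪t, n⟫ = 0 := by
    rw [ht', real_inner_smul_right] at htt'
    exact (mul_eq_zero.mp htt').resolve_left hκpos.ne'
  simp [orthonormal_vecCons_iff, ht, hn, htn]

lemma mem_specialOrthogonalGroup_iff_transpose_mul_self {n R : Type*} [Fintype n]
    [DecidableEq n] [CommRing R] {A : Matrix n n R} :
    A ∈ specialOrthogonalGroup n R ↔ Aᵀ * A = 1 ∧ A.det = 1 := by
  rw [mem_specialOrthogonalGroup_iff, mem_orthogonalGroup_iff']

lemma mul_transpose_mem_specialOrthogonalGroup {n R : Type*} [Fintype n] [DecidableEq n]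
    [CommRing R] {P Q : Matrix n n R} (hP : P ∈ specialOrthogonalGroup n R)
    (hQ : Q ∈ specialOrthogonalGroup n R) : P * Qᵀ ∈ specialOrthogonalGroup n R := by
  rw [mem_specialOrthogonalGroup_iff_transpose_mul_self] at *
  refine ⟨?_, by rw [det_mul, det_transpose, hP.2, hQ.2, mul_one]⟩
  rw [transpose_mul, transpose_transpose, Matrix.mul_assoc, ← Matrix.mul_assoc Pᵀ, hP.1,
    Matrix.one_mul, mul_eq_one_comm.mp hQ.1]

lemma transpose_frameMatrix (t n b : EuclideanSpace ℝ (Fin 3)) :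
    (frameMatrix t n b)ᵀ =
      (![WithLp.ofLp t, WithLp.ofLp n, WithLp.ofLp b] : Matrix (Fin 3) (Fin 3) ℝ) := by
  ext i j; fin_cases i <;> rfl

lemma transpose_frameMatrix_mul_self {t n b : EuclideanSpace ℝ (Fin 3)}
    (h : Orthonormal ℝ ![t, n, b]) : (frameMatrix t n b)ᵀ * frameMatrix t n b = 1 := by
  ext i j
  have := orthonormal_iff_ite.mp h i j
  rw [EuclideanSpace.real_inner_eq_dotProduct] at this
  rw [Matrix.mul_apply, Matrix.one_apply, ← this]
  fin_cases i <;> fin_cases j <;> simp [frameMatrix, dotProduct, Fin.sum_univ_three]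

lemma det_frameMatrix_cross3 (t n : EuclideanSpace ℝ (Fin 3)) :
    (frameMatrix t n (cross3 t n)).det = ‖cross3 t n‖ ^ 2 := by
  rw [← det_transpose, transpose_frameMatrix, ← real_inner_self_eq_norm_sq,
    EuclideanSpace.real_inner_eq_dotProduct, ← triple_product_eq_det,
    triple_product_permutation, triple_product_permutation, cross3_eq_crossProduct]

lemma frameMatrix_mem_specialOrthogonalGroup {t n : EuclideanSpace ℝ (Fin 3)}
    (h : Orthonormal ℝ ![t, n]) :
    frameMatrix t n (cross3 t n) ∈ specialOrthogonalGroup (Fin 3) ℝ := by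
  have hb : ‖cross3 t n‖ = 1 := (orthonormal_cross3 h).norm_eq_one 2
  rw [mem_specialOrthogonalGroup_iff_transpose_mul_self, det_frameMatrix_cross3, hb, one_pow]
  exact ⟨transpose_frameMatrix_mul_self (orthonormal_cross3 h), rfl⟩

lemma frameMatrix_frenet_mem_specialOrthogonalGroup {T T' N B : ℝ → EuclideanSpace ℝ (Fin 3)}
    {κ : ℝ → ℝ} {a b s : ℝ} (hab : a < b) (hs : s ∈ Icc a b)
    (hT : HasDerivAt T (T' s) s) (hunit : ∀ x ∈ Icc a b, ‖T x‖ = 1) (hκ : κ s = ‖T' s‖)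
    (hκpos : 0 < κ s) (hT' : T' s = κ s • N s) (hB : B s = cross3 (T s) (N s)) :
    frameMatrix (T s) (N s) (B s) ∈ specialOrthogonalGroup (Fin 3) ℝ :=
  hB ▸ frameMatrix_mem_specialOrthogonalGroup (orthonormal_tangent_normal (hunit s hs)
    (hT.hasDerivWithinAt.inner_eq_zero_of_norm_const (uniqueDiffOn_Icc hab s hs) hs hunit)
    hκ hκpos hT')

lemma mul_frameMatrix (A : Matrix (Fin 3) (Fin 3) ℝ) (t n b : EuclideanSpace ℝ (Fin 3)) :
    A * frameMatrix t n b =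
      frameMatrix (toEuclideanLin A t) (toEuclideanLin A n) (toEuclideanLin A b) := by
  ext i j; fin_cases j <;> simp [frameMatrix, Matrix.mul_apply, Matrix.mulVec, dotProduct]

lemma frameMatrix_inj {t n b t' n' b' : EuclideanSpace ℝ (Fin 3)} :
    frameMatrix t n b = frameMatrix t' n' b' ↔ t = t' ∧ n = n' ∧ b = b' := by
  refine ⟨fun h => ?_, by rintro ⟨rfl, rfl, rfl⟩; rfl⟩
  have col (j : Fin 3) : ![t, n, b] j = ![t', n', b'] j := by
    ext i; exact congrFun (congrFun h i) j
  exact ⟨col 0, col 1, col 2⟩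

lemma toEuclideanLin_mul_transpose_frameMatrix {t n b t' n' b' : EuclideanSpace ℝ (Fin 3)}
    (h : (frameMatrix t' n' b')ᵀ * frameMatrix t' n' b' = 1) :
    toEuclideanLin (frameMatrix t n b * (frameMatrix t' n' b')ᵀ) t' = t ∧
      toEuclideanLin (frameMatrix t n b * (frameMatrix t' n' b')ᵀ) n' = n ∧
      toEuclideanLin (frameMatrix t n b * (frameMatrix t' n' b')ᵀ) b' = b := by
  rw [← frameMatrix_inj, ← mul_frameMatrix, Matrix.mul_assoc, h, Matrix.mul_one]

theorem congruence_of_equal_curvature_torsion_general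
    (L : ℝ) (hL : 0 < L)
    (X₁ T₁ T₁' N₁ N₁' B₁ B₁' : ℝ → EuclideanSpace ℝ (Fin 3)) (κ₁ τ₁ : ℝ → ℝ)
    (X₂ T₂ T₂' N₂ N₂' B₂ B₂' : ℝ → EuclideanSpace ℝ (Fin 3)) (κ₂ τ₂ : ℝ → ℝ)
    -- Frenet apparatus of X₁
    (hXT₁ : ∀ s ∈ Icc (0 : ℝ) L, HasDerivAt X₁ (T₁ s) s)
    (hTT₁ : ∀ s ∈ Icc (0 : ℝ) L, HasDerivAt T₁ (T₁' s) s)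
    (hunit₁ : ∀ s ∈ Icc (0 : ℝ) L, ‖T₁ s‖ = 1)
    (hκ₁ : ∀ s ∈ Icc (0 : ℝ) L, κ₁ s = ‖T₁' s‖)
    (hκpos₁ : ∀ s ∈ Icc (0 : ℝ) L, 0 < κ₁ s)
    (hNN₁ : ∀ s ∈ Icc (0 : ℝ) L, HasDerivAt N₁ (N₁' s) s)
    (hB₁ : ∀ s ∈ Icc (0 : ℝ) L, B₁ s = cross3 (T₁ s) (N₁ s))
    (hBB₁ : ∀ s ∈ Icc (0 : ℝ) L, HasDerivAt B₁ (B₁' s) s)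
    -- Frenet-Serret equations for X₁
    (hFS₁a : ∀ s ∈ Icc (0 : ℝ) L, T₁' s = κ₁ s • N₁ s)
    (hFS₁b : ∀ s ∈ Icc (0 : ℝ) L, N₁' s = -(κ₁ s) • T₁ s + τ₁ s • B₁ s)
    (hFS₁c : ∀ s ∈ Icc (0 : ℝ) L, B₁' s = -(τ₁ s) • N₁ s)
    -- Frenet apparatus of X₂
    (hXT₂ : ∀ s ∈ Icc (0 : ℝ) L, HasDerivAt X₂ (T₂ s) s)
    (hTT₂ : ∀ s ∈ Icc (0 : ℝ) L, HasDerivAt T₂ (T₂' s) s)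
    (hunit₂ : ∀ s ∈ Icc (0 : ℝ) L, ‖T₂ s‖ = 1)
    (hκ₂ : ∀ s ∈ Icc (0 : ℝ) L, κ₂ s = ‖T₂' s‖)
    (hκpos₂ : ∀ s ∈ Icc (0 : ℝ) L, 0 < κ₂ s)
    (hNN₂ : ∀ s ∈ Icc (0 : ℝ) L, HasDerivAt N₂ (N₂' s) s)
    (hB₂ : ∀ s ∈ Icc (0 : ℝ) L, B₂ s = cross3 (T₂ s) (N₂ s))
    (hBB₂ : ∀ s ∈ Icc (0 : ℝ) L, HasDerivAt B₂ (B₂' s) s)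
    -- Frenet-Serret equations for X₂
    (hFS₂a : ∀ s ∈ Icc (0 : ℝ) L, T₂' s = κ₂ s • N₂ s)
    (hFS₂b : ∀ s ∈ Icc (0 : ℝ) L, N₂' s = -(κ₂ s) • T₂ s + τ₂ s • B₂ s)
    (hFS₂c : ∀ s ∈ Icc (0 : ℝ) L, B₂' s = -(τ₂ s) • N₂ s)
    -- equal curvature and torsion
    (hκeq : ∀ s ∈ Icc (0 : ℝ) L, κ₁ s = κ₂ s)
    (hτeq : ∀ s ∈ Icc (0 : ℝ) L, τ₁ s = τ₂ s) :
    ∃ (a : EuclideanSpace ℝ (Fin 3)) (R : Matrix (Fin 3) (Fin 3) ℝ),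
      Rᵀ * R = 1 ∧ R.det = 1 ∧
      (∀ s ∈ Icc (0 : ℝ) L, X₁ s = a + Matrix.toEuclideanLin R (X₂ s)) ∧
      R = frameMatrix (T₁ 0) (N₁ 0) (B₁ 0) * (frameMatrix (T₂ 0) (N₂ 0) (B₂ 0))ᵀ := by
  have h0 : (0 : ℝ) ∈ Icc 0 L := left_mem_Icc.2 hL.le
  have frenet₁ : IsFrenetSerretOn (Icc 0 L) κ₁ τ₁ T₁ N₁ B₁ := fun s hs =>
    ⟨hFS₁a s hs ▸ hTT₁ s hs, hFS₁b s hs ▸ hNN₁ s hs, hFS₁c s hs ▸ hBB₁ s hs⟩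
  have frenet₂ : IsFrenetSerretOn (Icc 0 L) κ₁ τ₁ T₂ N₂ B₂ := fun s hs => by
    rw [hκeq s hs, hτeq s hs]
    exact ⟨hFS₂a s hs ▸ hTT₂ s hs, hFS₂b s hs ▸ hNN₂ s hs, hFS₂c s hs ▸ hBB₂ s hs⟩
  have hQ₁ := frameMatrix_frenet_mem_specialOrthogonalGroup hL h0 (hTT₁ 0 h0) hunit₁
    (hκ₁ 0 h0) (hκpos₁ 0 h0) (hFS₁a 0 h0) (hB₁ 0 h0)
  have hQ₂ := frameMatrix_frenet_mem_specialOrthogonalGroup hL h0 (hTT₂ 0 h0) hunit₂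
    (hκ₂ 0 h0) (hκpos₂ 0 h0) (hFS₂a 0 h0) (hB₂ 0 h0)
  set R := frameMatrix (T₁ 0) (N₁ 0) (B₁ 0) * (frameMatrix (T₂ 0) (N₂ 0) (B₂ 0))ᵀ
  obtain ⟨hRR, hRdet⟩ := mem_specialOrthogonalGroup_iff_transpose_mul_self.1
    (mul_transpose_mem_specialOrthogonalGroup hQ₁ hQ₂)
  obtain ⟨hT0, hN0, hB0⟩ := toEuclideanLin_mul_transpose_frameMatrix
    (mem_specialOrthogonalGroup_iff_transpose_mul_self.1 hQ₂).1
  set ρ := (toEuclideanLin R).toContinuousLinearMap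
  have hT : ∀ s ∈ Icc 0 L, T₁ s = ρ (T₂ s) := fun s hs =>
    (frenet₁.unique (frenet₂.map ρ) hT0.symm hN0.symm hB0.symm s hs).1
  have hX : ∀ s ∈ Icc 0 L, X₁ s - ρ (X₂ s) = X₁ 0 - ρ (X₂ 0) :=
    eq_left_of_hasDerivAt_zero fun s hs => by
      have := (hXT₁ s hs).sub (ρ.hasFDerivAt.comp_hasDerivAt s (hXT₂ s hs))
      rwa [← hT s hs, sub_self] at this
  refine ⟨X₁ 0 - ρ (X₂ 0), R, hRR, hRdet, fun s hs => ?_, rfl⟩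
  rw [← hX s hs]
  exact (sub_add_cancel _ _).symm

/-- Two unit-speed C³ curves with the same (positive) curvature
and the same torsion are equal up to a rigid motion: `X₁ = a + R·X₂` for some
`a ∈ ℝ³` and `R ∈ SO(3)`, and moreover `R = Q₁(0)·Q₂(0)ᵀ` where
`Qᵢ(s) = [Tᵢ(s) | Nᵢ(s) | Bᵢ(s)]` are the Frenet frame matrices. -/
theorem congruence_of_equal_curvature_torsion
    (L : ℝ) (hL : 0 < L)
    (X₁ T₁ T₁' N₁ N₁' B₁ B₁' : ℝ → EuclideanSpace ℝ (Fin 3)) (κ₁ τ₁ : ℝ → ℝ)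
    (X₂ T₂ T₂' N₂ N₂' B₂ B₂' : ℝ → EuclideanSpace ℝ (Fin 3)) (κ₂ τ₂ : ℝ → ℝ)
    -- Frenet apparatus of X₁
    (hXT₁ : ∀ s ∈ Icc (0 : ℝ) L, HasDerivAt X₁ (T₁ s) s)
    (hTT₁ : ∀ s ∈ Icc (0 : ℝ) L, HasDerivAt T₁ (T₁' s) s)
    (hunit₁ : ∀ s ∈ Icc (0 : ℝ) L, ‖T₁ s‖ = 1)
    (hκ₁ : ∀ s ∈ Icc (0 : ℝ) L, κ₁ s = ‖T₁' s‖)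
    (hκpos₁ : ∀ s ∈ Icc (0 : ℝ) L, 0 < κ₁ s)
    (hN₁ : ∀ s ∈ Icc (0 : ℝ) L, N₁ s = (κ₁ s)⁻¹ • T₁' s)
    (hNN₁ : ∀ s ∈ Icc (0 : ℝ) L, HasDerivAt N₁ (N₁' s) s)
    (hB₁ : ∀ s ∈ Icc (0 : ℝ) L, B₁ s = cross3 (T₁ s) (N₁ s))
    (hBB₁ : ∀ s ∈ Icc (0 : ℝ) L, HasDerivAt B₁ (B₁' s) s)
    -- Frenet-Serret equations for X₁
    (hFS₁a : ∀ s ∈ Icc (0 : ℝ) L, T₁' s = κ₁ s • N₁ s)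
    (hFS₁b : ∀ s ∈ Icc (0 : ℝ) L, N₁' s = -(κ₁ s) • T₁ s + τ₁ s • B₁ s)
    (hFS₁c : ∀ s ∈ Icc (0 : ℝ) L, B₁' s = -(τ₁ s) • N₁ s)
    -- Frenet apparatus of X₂
    (hXT₂ : ∀ s ∈ Icc (0 : ℝ) L, HasDerivAt X₂ (T₂ s) s)
    (hTT₂ : ∀ s ∈ Icc (0 : ℝ) L, HasDerivAt T₂ (T₂' s) s)
    (hunit₂ : ∀ s ∈ Icc (0 : ℝ) L, ‖T₂ s‖ = 1)
    (hκ₂ : ∀ s ∈ Icc (0 : ℝ) L, κ₂ s = ‖T₂' s‖)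
    (hκpos₂ : ∀ s ∈ Icc (0 : ℝ) L, 0 < κ₂ s)
    (hN₂ : ∀ s ∈ Icc (0 : ℝ) L, N₂ s = (κ₂ s)⁻¹ • T₂' s)
    (hNN₂ : ∀ s ∈ Icc (0 : ℝ) L, HasDerivAt N₂ (N₂' s) s)
    (hB₂ : ∀ s ∈ Icc (0 : ℝ) L, B₂ s = cross3 (T₂ s) (N₂ s))
    (hBB₂ : ∀ s ∈ Icc (0 : ℝ) L, HasDerivAt B₂ (B₂' s) s)
    -- Frenet-Serret equations for X₂
    (hFS₂a : ∀ s ∈ Icc (0 : ℝ) L, T₂' s = κ₂ s • N₂ s)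
    (hFS₂b : ∀ s ∈ Icc (0 : ℝ) L, N₂' s = -(κ₂ s) • T₂ s + τ₂ s • B₂ s)
    (hFS₂c : ∀ s ∈ Icc (0 : ℝ) L, B₂' s = -(τ₂ s) • N₂ s)
    -- equal curvature and torsion
    (hκeq : ∀ s ∈ Icc (0 : ℝ) L, κ₁ s = κ₂ s)
    (hτeq : ∀ s ∈ Icc (0 : ℝ) L, τ₁ s = τ₂ s) :
    ∃ (a : EuclideanSpace ℝ (Fin 3)) (R : Matrix (Fin 3) (Fin 3) ℝ),
      Rᵀ * R = 1 ∧ R.det = 1 ∧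
      (∀ s ∈ Icc (0 : ℝ) L, X₁ s = a + Matrix.toEuclideanLin R (X₂ s)) ∧
      R = frameMatrix (T₁ 0) (N₁ 0) (B₁ 0) * (frameMatrix (T₂ 0) (N₂ 0) (B₂ 0))ᵀ :=
  congruence_of_equal_curvature_torsion_general L hL X₁ T₁ T₁' N₁ N₁' B₁ B₁' κ₁ τ₁ X₂ T₂ T₂' N₂ N₂'
    B₂ B₂' κ₂ τ₂ hXT₁ hTT₁ hunit₁ hκ₁ hκpos₁ hNN₁ hB₁ hBB₁ hFS₁a hFS₁b hFS₁c hXT₂ hTT₂ hunit₂ hκ₂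
    hκpos₂ hNN₂ hB₂ hBB₂ hFS₂a hFS₂b hFS₂c hκeq hτeq
end
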